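/- arXiv:1309.1254 — 3 statements merged into one kernel-verified Lean document; each statement's English description precedes it below -/
import Mathlib

section
/- For every untyped proof term v of HA+EM1, if v ↦ w (one step of the HA+EM1 reduction relation), then the translation of v reduces to the translation of w in at least one step of the HA+NEM reduction relation: ⟨v⟩ ≻⁺ ⟨w⟩. -/
/-! ### First-order arithmetic terms of the language L -/

inductive Trm : Type
  | var  : ℕ → Trm
  | zero : Trm
  | succ : Trm → Trm

/-- The numeral `S … S 0`. -/
def Trm.num : ℕ → Trm
  | 0 => .zero
  | n + 1 => .succ (Trm.num n)

def Trm.eval (ρ : ℕ → ℕ) : Trm → ℕ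
  | .var α => ρ α
  | .zero => 0
  | .succ t => Trm.eval ρ t + 1

/-- Substitution `t[m/α]` in first-order terms. -/
def Trm.subst (α : ℕ) (m : Trm) : Trm → Trm
  | .var β => if β = α then m else .var β
  | .zero => .zero
  | .succ t => .succ (Trm.subst α m t)

def Trm.fv : Trm → Set ℕ
  | .var α => {α}
  | .zero => ∅
  | .succ t => Trm.fv t

/-- A symbol for a primitive recursive (decidable) relation on ℕ,
    given by its boolean interpretation. -/
structure PredSym where
  interp : List ℕ → Bool

/-- `¬P`, the atomic predicate equivalent to the boolean negation of `P`. -/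
def PredSym.not (P : PredSym) : PredSym := ⟨fun l => ! P.interp l⟩

/-- The atomic formula `P(t₁,…,tₙ)` is true (under every environment;
    for closed instances this is ordinary truth). -/
def atomTrue (P : PredSym) (args : List Trm) : Prop :=
  ∀ ρ : ℕ → ℕ, P.interp (args.map (Trm.eval ρ)) = true

def atomFalse (P : PredSym) (args : List Trm) : Prop :=
  ∀ ρ : ℕ → ℕ, P.interp (args.map (Trm.eval ρ)) = false

/-! ### Formulas of HA -/

inductive Formula : Type
  | atom : PredSym → List Trm → Formula
  | and  : Formula → Formula → Formula
  | or   : Formula → Formula → Formula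
  | imp  : Formula → Formula → Formula
  | all  : ℕ → Formula → Formula
  | ex   : ℕ → Formula → Formula

/-- Substitution `A[m/α]` in formulas. -/
def Formula.subst (α : ℕ) (m : Trm) : Formula → Formula
  | .atom P args => .atom P (args.map (Trm.subst α m))
  | .and A B => .and (A.subst α m) (B.subst α m)
  | .or A B => .or (A.subst α m) (B.subst α m)
  | .imp A B => .imp (A.subst α m) (B.subst α m)
  | .all β A => if β = α then .all β A else .all β (A.subst α m)
  | .ex β A => if β = α then .ex β A else .ex β (A.subst α m)

/-- Free first-order variables of a formula. -/
def Formula.fv : Formula → Set ℕ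
  | .atom _ args => {β | ∃ t ∈ args, β ∈ t.fv}
  | .and A B => A.fv ∪ B.fv
  | .or A B => A.fv ∪ B.fv
  | .imp A B => A.fv ∪ B.fv
  | .all β A => A.fv \ {β}
  | .ex β A => A.fv \ {β}

def Formula.size : Formula → ℕ
  | .atom _ _ => 1
  | .and A B => A.size + B.size + 1
  | .or A B => A.size + B.size + 1
  | .imp A B => A.size + B.size + 1
  | .all _ A => A.size + 1
  | .ex _ A => A.size + 1

theorem Formula.size_subst (α : ℕ) (m : Trm) (A : Formula) :
    (A.subst α m).size = A.size := by
  induction A with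
  | atom P args => simp [Formula.subst, Formula.size]
  | and A B ihA ihB => simp [Formula.subst, Formula.size, ihA, ihB]
  | or A B ihA ihB => simp [Formula.subst, Formula.size, ihA, ihB]
  | imp A B ihA ihB => simp [Formula.subst, Formula.size, ihA, ihB]
  | all β A ih => by_cases h : β = α <;> simp [Formula.subst, Formula.size, h, ih]
  | ex β A ih => by_cases h : β = α <;> simp [Formula.subst, Formula.size, h, ih]
/-! ### Proof terms of HA + NEM -/

inductive PTm : Type
  | var     : ℕ → PTm                          -- x
  | app     : PTm → PTm → PTm                  -- t u
  | tapp    : PTm → Trm → PTm                  -- t m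
  | lam     : ℕ → PTm → PTm                    -- λx u
  | tlam    : ℕ → PTm → PTm                    -- λα u
  | pair    : PTm → PTm → PTm                  -- ⟨t,u⟩
  | proj    : Bool → PTm → PTm                 -- π₀ u / π₁ u
  | inj     : Bool → PTm → PTm                 -- ι₀(u) / ι₁(u)
  | case    : PTm → ℕ → PTm → ℕ → PTm → PTm    -- t[x.u, y.v]
  | exIntro : Trm → PTm → PTm                  -- (m, t)
  | exElim  : PTm → ℕ → ℕ → PTm → PTm          -- t[(α,x).u]
  | em      : PTm → PTm → PTm                  -- E(u,v)
  | hyp     : PredSym → List Trm → ℕ → PTm     -- HYP_P^α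
  | wit     : PredSym → List Trm → ℕ → PTm     -- WIT_P^α
  | tt      : PTm                              -- True
  | natrec  : PTm → PTm → Trm → PTm            -- rec u v m
  | const   : ℕ → PTm                          -- constant r (Post rules)

/-- Substitution `t[s/x]` of a proof term for a proof-term variable. -/
def PTm.psubst (x : ℕ) (s : PTm) : PTm → PTm
  | .var y => if y = x then s else .var y
  | .app t u => .app ((PTm.psubst x s t)) ((PTm.psubst x s u))
  | .tapp t m => .tapp ((PTm.psubst x s t)) m
  | .lam y u => if y = x then .lam y u else .lam y ((PTm.psubst x s u))
  | .tlam α u => .tlam α ((PTm.psubst x s u))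
  | .pair t u => .pair ((PTm.psubst x s t)) ((PTm.psubst x s u))
  | .proj i u => .proj i ((PTm.psubst x s u))
  | .inj i u => .inj i ((PTm.psubst x s u))
  | .case t y u z v =>
      .case ((PTm.psubst x s t)) y (if y = x then u else (PTm.psubst x s u))
        z (if z = x then v else (PTm.psubst x s v))
  | .exIntro m t => .exIntro m ((PTm.psubst x s t))
  | .exElim t α y u => .exElim ((PTm.psubst x s t)) α y (if y = x then u else (PTm.psubst x s u))
  | .em u v => .em ((PTm.psubst x s u)) ((PTm.psubst x s v))
  | .hyp P args α => .hyp P args α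
  | .wit P args α => .wit P args α
  | .tt => .tt
  | .natrec u v m => .natrec ((PTm.psubst x s u)) ((PTm.psubst x s v)) m
  | .const r => .const r

/-- Substitution `t[m/α]` of a first-order term for a first-order variable in a proof term. -/
def PTm.tsubst (α : ℕ) (m : Trm) : PTm → PTm
  | .var y => .var y
  | .app t u => .app ((PTm.tsubst α m t)) ((PTm.tsubst α m u))
  | .tapp t n => .tapp ((PTm.tsubst α m t)) (n.subst α m)
  | .lam y u => .lam y ((PTm.tsubst α m u))
  | .tlam β u => if β = α then .tlam β u else .tlam β ((PTm.tsubst α m u))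
  | .pair t u => .pair ((PTm.tsubst α m t)) ((PTm.tsubst α m u))
  | .proj i u => .proj i ((PTm.tsubst α m u))
  | .inj i u => .inj i ((PTm.tsubst α m u))
  | .case t y u z v => .case ((PTm.tsubst α m t)) y ((PTm.tsubst α m u)) z ((PTm.tsubst α m v))
  | .exIntro n t => .exIntro (n.subst α m) ((PTm.tsubst α m t))
  | .exElim t β y u =>
      .exElim ((PTm.tsubst α m t)) β y (if β = α then u else (PTm.tsubst α m u))
  | .em u v => .em ((PTm.tsubst α m u)) ((PTm.tsubst α m v))
  | .hyp P args β => if β = α then .hyp P args β else .hyp P (args.map (Trm.subst α m)) β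
  | .wit P args β => if β = α then .wit P args β else .wit P (args.map (Trm.subst α m)) β
  | .tt => .tt
  | .natrec u v n => .natrec ((PTm.tsubst α m u)) ((PTm.tsubst α m v)) (n.subst α m)
  | .const r => .const r

/-! ### The one-step reduction ≻ of HA + NEM -/

inductive NStep : PTm → PTm → Prop
  -- Reduction rules for HA
  | beta (x : ℕ) (u t : PTm) : NStep (.app (.lam x u) t) (PTm.psubst x t u)
  | tbeta (α : ℕ) (u : PTm) (m : Trm) : NStep (.tapp (.tlam α u) m) (PTm.tsubst α m u)
  | projPair (i : Bool) (u₀ u₁ : PTm) :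
      NStep (.proj i (.pair u₀ u₁)) (if i then u₁ else u₀)
  | caseInj₀ (u : PTm) (x₀ : ℕ) (t₀ : PTm) (x₁ : ℕ) (t₁ : PTm) :
      NStep (.case (.inj false u) x₀ t₀ x₁ t₁) (PTm.psubst x₀ u t₀)
  | caseInj₁ (u : PTm) (x₀ : ℕ) (t₀ : PTm) (x₁ : ℕ) (t₁ : PTm) :
      NStep (.case (.inj true u) x₀ t₀ x₁ t₁) (PTm.psubst x₁ u t₁)
  | exIE (n : ℕ) (u : PTm) (α x : ℕ) (v : PTm) :
      NStep (.exElim (.exIntro (Trm.num n) u) α x v) (PTm.psubst x u (PTm.tsubst α (Trm.num n) v))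
  | recZero (u v : PTm) : NStep (.natrec u v .zero) u
  | recSucc (u v : PTm) (n : ℕ) :
      NStep (.natrec u v (.succ (Trm.num n)))
            (.app (.tapp v (Trm.num n)) (.natrec u v (Trm.num n)))
  -- Permutation rules for NEM
  | permApp (u v w : PTm) : NStep (.app (.em u v) w) (.em (.app u w) (.app v w))
  | permTapp (u v : PTm) (m : Trm) : NStep (.tapp (.em u v) m) (.em (.tapp u m) (.tapp v m))
  | permProj (i : Bool) (u v : PTm) : NStep (.proj i (.em u v)) (.em (.proj i u) (.proj i v))
  | permCase (u v : PTm) (x : ℕ) (w₁ : PTm) (y : ℕ) (w₂ : PTm) :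
      NStep (.case (.em u v) x w₁ y w₂) (.em (.case u x w₁ y w₂) (.case v x w₁ y w₂))
  | permExElim (u v : PTm) (α x : ℕ) (w : PTm) :
      NStep (.exElim (.em u v) α x w) (.em (.exElim u α x w) (.exElim v α x w))
  -- Reduction rules for NEM
  | hypTrue (P : PredSym) (args : List Trm) (α : ℕ) (n : ℕ) :
      atomTrue P (args.map (Trm.subst α (Trm.num n))) →
      NStep (.tapp (.hyp P args α) (Trm.num n)) .tt
  | witIntro (P : PredSym) (args : List Trm) (α : ℕ) (n : ℕ) :
      NStep (.wit P args α) (.exIntro (Trm.num n) .tt)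
  | emL (u v : PTm) : NStep (.em u v) u
  | emR (u v : PTm) : NStep (.em u v) v
  -- Congruence (context closure)
  | congAppL {t t'} (u) : NStep t t' → NStep (.app t u) (.app t' u)
  | congAppR (t) {u u'} : NStep u u' → NStep (.app t u) (.app t u')
  | congTapp {t t'} (m) : NStep t t' → NStep (.tapp t m) (.tapp t' m)
  | congLam (x) {u u'} : NStep u u' → NStep (.lam x u) (.lam x u')
  | congTlam (α) {u u'} : NStep u u' → NStep (.tlam α u) (.tlam α u')
  | congPairL {t t'} (u) : NStep t t' → NStep (.pair t u) (.pair t' u)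
  | congPairR (t) {u u'} : NStep u u' → NStep (.pair t u) (.pair t u')
  | congProj (i) {u u'} : NStep u u' → NStep (.proj i u) (.proj i u')
  | congInj (i) {u u'} : NStep u u' → NStep (.inj i u) (.inj i u')
  | congCaseT {t t'} (x u y v) : NStep t t' → NStep (.case t x u y v) (.case t' x u y v)
  | congCaseL (t x) {u u'} (y v) : NStep u u' → NStep (.case t x u y v) (.case t x u' y v)
  | congCaseR (t x u y) {v v'} : NStep v v' → NStep (.case t x u y v) (.case t x u y v')
  | congExIntro (m) {t t'} : NStep t t' → NStep (.exIntro m t) (.exIntro m t')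
  | congExElimT {t t'} (α x u) : NStep t t' → NStep (.exElim t α x u) (.exElim t' α x u)
  | congExElimU (t α x) {u u'} : NStep u u' → NStep (.exElim t α x u) (.exElim t α x u')
  | congEmL {u u'} (v) : NStep u u' → NStep (.em u v) (.em u' v)
  | congEmR (u) {v v'} : NStep v v' → NStep (.em u v) (.em u v')
  | congRecU {u u'} (v m) : NStep u u' → NStep (.natrec u v m) (.natrec u' v m)
  | congRecV (u) {v v'} (m) : NStep v v' → NStep (.natrec u v m) (.natrec u v' m)

/-- `t ≻* t'`: zero or more reduction steps. -/
abbrev NSteps : PTm → PTm → Prop := Relation.ReflTransGen NStep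

/-- `t` is strongly normalizing w.r.t. ≻ (no infinite reduction sequence from `t`). -/
def NSN (t : PTm) : Prop := Acc (fun a b => NStep b a) t

/-- Neutral proof terms. -/
def Neutral : PTm → Prop
  | .lam _ _ => False
  | .tlam _ _ => False
  | .pair _ _ => False
  | .inj _ _ => False
  | .exIntro _ _ => False
  | .em _ _ => False
  | .hyp _ _ _ => False
  | _ => True

/-! ### Reducibility -/

/-- `Reducible C t`: "t is reducible of type C". -/
def Reducible : Formula → PTm → Prop
  | .atom _ _, t => NSN t
  | .and A B, t => Reducible A (.proj false t) ∧ Reducible B (.proj true t)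
  | .imp A B, t => ∀ u, Reducible A u → Reducible B (.app t u)
  | .or A B, t => NSN t ∧ (∀ u, NSteps t (.inj false u) → Reducible A u)
      ∧ (∀ u, NSteps t (.inj true u) → Reducible B u)
  | .all α A, t => ∀ n : Trm, Reducible (A.subst α n) (.tapp t n)
  | .ex α A, t => NSN t ∧ ∀ (n : Trm) (u : PTm), NSteps t (.exIntro n u) → Reducible (A.subst α n) u
termination_by A _ => A.size
decreasing_by all_goals simp only [Formula.size, Formula.size_subst] <;> omega
/-! ### Typing for HA + NEM -/

/-- A context entry: a proof-term variable declaration `x : A`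
    or an EM₁-hypothesis variable declaration `a : A`. -/
inductive CtxEntry : Type
  | pvar : ℕ → Formula → CtxEntry
  | hvar : ℕ → Formula → CtxEntry

abbrev Ctx : Type := List CtxEntry

def CtxEntry.isPvar : CtxEntry → Prop
  | .pvar _ _ => True
  | .hvar _ _ => False

def CtxEntry.formula : CtxEntry → Formula
  | .pvar _ A => A
  | .hvar _ A => A

def CtxEntry.fv (e : CtxEntry) : Set ℕ := e.formula.fv

/-- The proof term `r u₁ … uₙ` of a Post rule (`True` if `n = 0`). -/
def postTerm (r : ℕ) (us : List PTm) : PTm :=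
  if us.isEmpty then .tt else us.foldl PTm.app (.const r)

/-- The natural deduction system HA + NEM. -/
inductive NDeriv : Ctx → PTm → Formula → Prop
  | var {Γ : Ctx} {x : ℕ} {A : Formula} :
      CtxEntry.pvar x A ∈ Γ → NDeriv Γ (.var x) A
  | hypAx {Γ : Ctx} {a : ℕ} {P : PredSym} {args : List Trm} {α : ℕ} :
      CtxEntry.hvar a (.all α (.atom P args)) ∈ Γ →
      NDeriv Γ (.hyp P args α) (.all α (.atom P args))
  | witAx {Γ : Ctx} {a : ℕ} {P : PredSym} {args : List Trm} {α : ℕ} :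
      CtxEntry.hvar a (.ex α (.atom P.not args)) ∈ Γ →
      NDeriv Γ (.wit P args α) (.ex α (.atom P.not args))
  | andI {Γ u t A B} : NDeriv Γ u A → NDeriv Γ t B → NDeriv Γ (.pair u t) (.and A B)
  | andE₀ {Γ u A B} : NDeriv Γ u (.and A B) → NDeriv Γ (.proj false u) A
  | andE₁ {Γ u A B} : NDeriv Γ u (.and A B) → NDeriv Γ (.proj true u) B
  | impE {Γ t u A B} : NDeriv Γ t (.imp A B) → NDeriv Γ u A → NDeriv Γ (.app t u) B
  | impI {Γ x u A B} : NDeriv (CtxEntry.pvar x A :: Γ) u B → NDeriv Γ (.lam x u) (.imp A B)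
  | orI₀ {Γ u A B} : NDeriv Γ u A → NDeriv Γ (.inj false u) (.or A B)
  | orI₁ {Γ u A B} : NDeriv Γ u B → NDeriv Γ (.inj true u) (.or A B)
  | orE {Γ u x y w₁ w₂ A B C} :
      NDeriv Γ u (.or A B) → NDeriv (CtxEntry.pvar x A :: Γ) w₁ C →
      NDeriv (CtxEntry.pvar y B :: Γ) w₂ C → NDeriv Γ (.case u x w₁ y w₂) C
  | allE {Γ u α A} (m : Trm) : NDeriv Γ u (.all α A) → NDeriv Γ (.tapp u m) (A.subst α m)
  | allI {Γ u α A} :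
      NDeriv Γ u A → (∀ e ∈ Γ, α ∉ CtxEntry.fv e) → NDeriv Γ (.tlam α u) (.all α A)
  | exI {Γ u α A} (m : Trm) : NDeriv Γ u (A.subst α m) → NDeriv Γ (.exIntro m u) (.ex α A)
  | exE {Γ u t α x A C} :
      NDeriv Γ u (.ex α A) → NDeriv (CtxEntry.pvar x A :: Γ) t C →
      α ∉ Formula.fv C → (∀ e ∈ Γ, α ∉ CtxEntry.fv e) →
      NDeriv Γ (.exElim u α x t) C
  | ind {Γ u v α A} (m : Trm) :
      NDeriv Γ u (A.subst α .zero) →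
      NDeriv Γ v (.all α (.imp A (A.subst α (.succ (.var α))))) →
      NDeriv Γ (.natrec u v m) (A.subst α m)
  | post {Γ : Ctx} (r : ℕ) (Ps : List (PredSym × List Trm)) (P : PredSym)
      (args : List Trm) (us : List PTm) :
      (hlen : us.length = Ps.length) →
      (∀ (i : ℕ) (h₁ : i < us.length) (h₂ : i < Ps.length),
        NDeriv Γ (us.get ⟨i, h₁⟩) (.atom (Ps.get ⟨i, h₂⟩).1 (Ps.get ⟨i, h₂⟩).2)) →
      (∀ ρ : ℕ → ℕ, (∀ pa ∈ Ps, pa.1.interp (pa.2.map (Trm.eval ρ)) = true) →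
        P.interp (args.map (Trm.eval ρ)) = true) →
      NDeriv Γ (postTerm r us) (.atom P args)
  | nem {Γ w₁ w₂ C} {a : ℕ} {P : PredSym} {args : List Trm} {α : ℕ} :
      NDeriv (CtxEntry.hvar a (.all α (.atom P args)) :: Γ) w₁ C →
      NDeriv (CtxEntry.hvar a (.ex α (.atom P.not args)) :: Γ) w₂ C →
      NDeriv Γ (.em w₁ w₂) C
/-! ### Proof terms of HA + EM₁ (with hypothesis variables) -/

inductive EPTm : Type
  | var     : ℕ → EPTm
  | app     : EPTm → EPTm → EPTm
  | tapp    : EPTm → Trm → EPTm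
  | lam     : ℕ → EPTm → EPTm
  | tlam    : ℕ → EPTm → EPTm
  | pair    : EPTm → EPTm → EPTm
  | proj    : Bool → EPTm → EPTm
  | inj     : Bool → EPTm → EPTm
  | case    : EPTm → ℕ → EPTm → ℕ → EPTm → EPTm
  | exIntro : Trm → EPTm → EPTm
  | exElim  : EPTm → ℕ → ℕ → EPTm → EPTm
  | em      : ℕ → EPTm → EPTm → EPTm             -- E_a(u,v)
  | hyp     : ℕ → PredSym → List Trm → ℕ → EPTm  -- [a]HYP_P^α
  | wit     : ℕ → PredSym → List Trm → ℕ → EPTm  -- [a]WIT_P^α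
  | tt      : EPTm
  | natrec  : EPTm → EPTm → Trm → EPTm
  | const   : ℕ → EPTm

/-- Substitution `t[s/x]` of a proof term for a proof-term variable. -/
def EPTm.psubst (x : ℕ) (s : EPTm) : EPTm → EPTm
  | .var y => if y = x then s else .var y
  | .app t u => .app (EPTm.psubst x s t) (EPTm.psubst x s u)
  | .tapp t m => .tapp (EPTm.psubst x s t) m
  | .lam y u => if y = x then .lam y u else .lam y (EPTm.psubst x s u)
  | .tlam α u => .tlam α (EPTm.psubst x s u)
  | .pair t u => .pair (EPTm.psubst x s t) (EPTm.psubst x s u)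
  | .proj i u => .proj i (EPTm.psubst x s u)
  | .inj i u => .inj i (EPTm.psubst x s u)
  | .case t y u z v =>
      .case (EPTm.psubst x s t) y (if y = x then u else EPTm.psubst x s u)
        z (if z = x then v else EPTm.psubst x s v)
  | .exIntro m t => .exIntro m (EPTm.psubst x s t)
  | .exElim t α y u => .exElim (EPTm.psubst x s t) α y (if y = x then u else EPTm.psubst x s u)
  | .em a u v => .em a (EPTm.psubst x s u) (EPTm.psubst x s v)
  | .hyp a P args α => .hyp a P args α
  | .wit a P args α => .wit a P args α
  | .tt => .tt
  | .natrec u v m => .natrec (EPTm.psubst x s u) (EPTm.psubst x s v) m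
  | .const r => .const r

/-- Substitution `t[m/α]` of a first-order term in a proof term. -/
def EPTm.tsubst (α : ℕ) (m : Trm) : EPTm → EPTm
  | .var y => .var y
  | .app t u => .app (EPTm.tsubst α m t) (EPTm.tsubst α m u)
  | .tapp t n => .tapp (EPTm.tsubst α m t) (n.subst α m)
  | .lam y u => .lam y (EPTm.tsubst α m u)
  | .tlam β u => if β = α then .tlam β u else .tlam β (EPTm.tsubst α m u)
  | .pair t u => .pair (EPTm.tsubst α m t) (EPTm.tsubst α m u)
  | .proj i u => .proj i (EPTm.tsubst α m u)
  | .inj i u => .inj i (EPTm.tsubst α m u)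
  | .case t y u z v => .case (EPTm.tsubst α m t) y (EPTm.tsubst α m u) z (EPTm.tsubst α m v)
  | .exIntro n t => .exIntro (n.subst α m) (EPTm.tsubst α m t)
  | .exElim t β y u => .exElim (EPTm.tsubst α m t) β y (if β = α then u else EPTm.tsubst α m u)
  | .em a u v => .em a (EPTm.tsubst α m u) (EPTm.tsubst α m v)
  | .hyp a P args β => if β = α then .hyp a P args β else .hyp a P (args.map (Trm.subst α m)) β
  | .wit a P args β => if β = α then .wit a P args β else .wit a P (args.map (Trm.subst α m)) β
  | .tt => .tt
  | .natrec u v n => .natrec (EPTm.tsubst α m u) (EPTm.tsubst α m v) (n.subst α m)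
  | .const r => .const r

/-- `a` occurs free (as a hypothesis variable) in a term;
    `E_a(u,v)` binds `a` in both `u` and `v`. -/
def EPTm.hvFree (a : ℕ) : EPTm → Prop
  | .var _ => False
  | .app t u => EPTm.hvFree a t ∨ EPTm.hvFree a u
  | .tapp t _ => EPTm.hvFree a t
  | .lam _ u => EPTm.hvFree a u
  | .tlam _ u => EPTm.hvFree a u
  | .pair t u => EPTm.hvFree a t ∨ EPTm.hvFree a u
  | .proj _ u => EPTm.hvFree a u
  | .inj _ u => EPTm.hvFree a u
  | .case t _ u _ v => EPTm.hvFree a t ∨ EPTm.hvFree a u ∨ EPTm.hvFree a v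
  | .exIntro _ t => EPTm.hvFree a t
  | .exElim t _ _ u => EPTm.hvFree a t ∨ EPTm.hvFree a u
  | .em b u v => b ≠ a ∧ (EPTm.hvFree a u ∨ EPTm.hvFree a v)
  | .hyp b _ _ _ => b = a
  | .wit b _ _ _ => b = a
  | .tt => False
  | .natrec u v _ => EPTm.hvFree a u ∨ EPTm.hvFree a v
  | .const _ => False

/-- `[a]HYP_P^α n` occurs in the term (at a position where `a` is free). -/
def EPTm.occHypApp (a : ℕ) (P : PredSym) (args : List Trm) (β : ℕ) (n : ℕ) : EPTm → Prop
  | .var _ => False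
  | .app t u => EPTm.occHypApp a P args β n t ∨ EPTm.occHypApp a P args β n u
  | .tapp t m => (t = .hyp a P args β ∧ m = Trm.num n) ∨ EPTm.occHypApp a P args β n t
  | .lam _ u => EPTm.occHypApp a P args β n u
  | .tlam _ u => EPTm.occHypApp a P args β n u
  | .pair t u => EPTm.occHypApp a P args β n t ∨ EPTm.occHypApp a P args β n u
  | .proj _ u => EPTm.occHypApp a P args β n u
  | .inj _ u => EPTm.occHypApp a P args β n u
  | .case t _ u _ v =>
      EPTm.occHypApp a P args β n t ∨ EPTm.occHypApp a P args β n u ∨ EPTm.occHypApp a P args β n v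
  | .exIntro _ t => EPTm.occHypApp a P args β n t
  | .exElim t _ _ u => EPTm.occHypApp a P args β n t ∨ EPTm.occHypApp a P args β n u
  | .em b u v => b ≠ a ∧ (EPTm.occHypApp a P args β n u ∨ EPTm.occHypApp a P args β n v)
  | .hyp _ _ _ _ => False
  | .wit _ _ _ _ => False
  | .tt => False
  | .natrec u v _ => EPTm.occHypApp a P args β n u ∨ EPTm.occHypApp a P args β n v
  | .const _ => False

/-- `v[a := n]`: replace each subterm `[a]WIT_P^α` corresponding to a free
    occurrence of `a` by `(n, True)`. -/
def EPTm.witElim (a : ℕ) (n : ℕ) : EPTm → EPTm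
  | .var y => .var y
  | .app t u => .app (EPTm.witElim a n t) (EPTm.witElim a n u)
  | .tapp t m => .tapp (EPTm.witElim a n t) m
  | .lam y u => .lam y (EPTm.witElim a n u)
  | .tlam β u => .tlam β (EPTm.witElim a n u)
  | .pair t u => .pair (EPTm.witElim a n t) (EPTm.witElim a n u)
  | .proj i u => .proj i (EPTm.witElim a n u)
  | .inj i u => .inj i (EPTm.witElim a n u)
  | .case t y u z v => .case (EPTm.witElim a n t) y (EPTm.witElim a n u) z (EPTm.witElim a n v)
  | .exIntro m t => .exIntro m (EPTm.witElim a n t)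
  | .exElim t β y u => .exElim (EPTm.witElim a n t) β y (EPTm.witElim a n u)
  | .em b u v => if b = a then .em b u v else .em b (EPTm.witElim a n u) (EPTm.witElim a n v)
  | .hyp b P args β => .hyp b P args β
  | .wit b P args β => if b = a then .exIntro (Trm.num n) .tt else .wit b P args β
  | .tt => .tt
  | .natrec u v m => .natrec (EPTm.witElim a n u) (EPTm.witElim a n v) m
  | .const r => .const r

/-! ### The one-step reduction ↦ of HA + EM₁ -/

inductive EStep : EPTm → EPTm → Prop
  -- Reduction rules for HA
  | beta (x : ℕ) (u t : EPTm) : EStep (.app (.lam x u) t) (EPTm.psubst x t u)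
  | tbeta (α : ℕ) (u : EPTm) (m : Trm) : EStep (.tapp (.tlam α u) m) (EPTm.tsubst α m u)
  | projPair (i : Bool) (u₀ u₁ : EPTm) :
      EStep (.proj i (.pair u₀ u₁)) (if i then u₁ else u₀)
  | caseInj₀ (u : EPTm) (x₀ : ℕ) (t₀ : EPTm) (x₁ : ℕ) (t₁ : EPTm) :
      EStep (.case (.inj false u) x₀ t₀ x₁ t₁) (EPTm.psubst x₀ u t₀)
  | caseInj₁ (u : EPTm) (x₀ : ℕ) (t₀ : EPTm) (x₁ : ℕ) (t₁ : EPTm) :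
      EStep (.case (.inj true u) x₀ t₀ x₁ t₁) (EPTm.psubst x₁ u t₁)
  | exIE (n : ℕ) (u : EPTm) (α x : ℕ) (v : EPTm) :
      EStep (.exElim (.exIntro (Trm.num n) u) α x v)
            (EPTm.psubst x u (EPTm.tsubst α (Trm.num n) v))
  | recZero (u v : EPTm) : EStep (.natrec u v .zero) u
  | recSucc (u v : EPTm) (n : ℕ) :
      EStep (.natrec u v (.succ (Trm.num n)))
            (.app (.tapp v (Trm.num n)) (.natrec u v (Trm.num n)))
  -- Permutation rules for EM₁
  | permApp (a : ℕ) (u v w : EPTm) : EStep (.app (.em a u v) w) (.em a (.app u w) (.app v w))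
  | permTapp (a : ℕ) (u v : EPTm) (m : Trm) :
      EStep (.tapp (.em a u v) m) (.em a (.tapp u m) (.tapp v m))
  | permProj (a : ℕ) (i : Bool) (u v : EPTm) :
      EStep (.proj i (.em a u v)) (.em a (.proj i u) (.proj i v))
  | permCase (a : ℕ) (u v : EPTm) (x : ℕ) (w₁ : EPTm) (y : ℕ) (w₂ : EPTm) :
      EStep (.case (.em a u v) x w₁ y w₂) (.em a (.case u x w₁ y w₂) (.case v x w₁ y w₂))
  | permExElim (a : ℕ) (u v : EPTm) (α x : ℕ) (w : EPTm) :
      EStep (.exElim (.em a u v) α x w) (.em a (.exElim u α x w) (.exElim v α x w))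
  -- Reduction rules for EM₁
  | hypTrue (a : ℕ) (P : PredSym) (args : List Trm) (α : ℕ) (n : ℕ) :
      atomTrue P (args.map (Trm.subst α (Trm.num n))) →
      EStep (.tapp (.hyp a P args α) (Trm.num n)) .tt
  | emSimp (a : ℕ) (u v : EPTm) : ¬ EPTm.hvFree a u → EStep (.em a u v) u
  | emRaise (a : ℕ) (u v : EPTm) (P : PredSym) (args : List Trm) (α : ℕ) (n : ℕ) :
      EPTm.occHypApp a P args α n u →
      atomFalse P (args.map (Trm.subst α (Trm.num n))) →
      EStep (.em a u v) (EPTm.witElim a n v)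
  -- Congruence (context closure)
  | congAppL {t t'} (u) : EStep t t' → EStep (.app t u) (.app t' u)
  | congAppR (t) {u u'} : EStep u u' → EStep (.app t u) (.app t u')
  | congTapp {t t'} (m) : EStep t t' → EStep (.tapp t m) (.tapp t' m)
  | congLam (x) {u u'} : EStep u u' → EStep (.lam x u) (.lam x u')
  | congTlam (α) {u u'} : EStep u u' → EStep (.tlam α u) (.tlam α u')
  | congPairL {t t'} (u) : EStep t t' → EStep (.pair t u) (.pair t' u)
  | congPairR (t) {u u'} : EStep u u' → EStep (.pair t u) (.pair t u')
  | congProj (i) {u u'} : EStep u u' → EStep (.proj i u) (.proj i u')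
  | congInj (i) {u u'} : EStep u u' → EStep (.inj i u) (.inj i u')
  | congCaseT {t t'} (x u y v) : EStep t t' → EStep (.case t x u y v) (.case t' x u y v)
  | congCaseL (t x) {u u'} (y v) : EStep u u' → EStep (.case t x u y v) (.case t x u' y v)
  | congCaseR (t x u y) {v v'} : EStep v v' → EStep (.case t x u y v) (.case t x u y v')
  | congExIntro (m) {t t'} : EStep t t' → EStep (.exIntro m t) (.exIntro m t')
  | congExElimT {t t'} (α x u) : EStep t t' → EStep (.exElim t α x u) (.exElim t' α x u)
  | congExElimU (t α x) {u u'} : EStep u u' → EStep (.exElim t α x u) (.exElim t α x u')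
  | congEmL (a) {u u'} (v) : EStep u u' → EStep (.em a u v) (.em a u' v)
  | congEmR (a u) {v v'} : EStep v v' → EStep (.em a u v) (.em a u v')
  | congRecU {u u'} (v m) : EStep u u' → EStep (.natrec u v m) (.natrec u' v m)
  | congRecV (u) {v v'} (m) : EStep v v' → EStep (.natrec u v m) (.natrec u v' m)

/-- `t` is strongly normalizing w.r.t. ↦. -/
def ESN (t : EPTm) : Prop := Acc (fun a b => EStep b a) t

/-- The translation ⟨·⟩ from HA + EM₁ proof terms to HA + NEM proof terms:
    erase every `[a]` and replace each `E_a` by `E`. -/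
def EPTm.transl : EPTm → PTm
  | .var x => .var x
  | .app t u => .app (EPTm.transl t) (EPTm.transl u)
  | .tapp t m => .tapp (EPTm.transl t) m
  | .lam x u => .lam x (EPTm.transl u)
  | .tlam α u => .tlam α (EPTm.transl u)
  | .pair t u => .pair (EPTm.transl t) (EPTm.transl u)
  | .proj i u => .proj i (EPTm.transl u)
  | .inj i u => .inj i (EPTm.transl u)
  | .case t x u y v => .case (EPTm.transl t) x (EPTm.transl u) y (EPTm.transl v)
  | .exIntro m t => .exIntro m (EPTm.transl t)
  | .exElim t α x u => .exElim (EPTm.transl t) α x (EPTm.transl u)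
  | .em _ u v => .em (EPTm.transl u) (EPTm.transl v)
  | .hyp _ P args α => .hyp P args α
  | .wit _ P args α => .wit P args α
  | .tt => .tt
  | .natrec u v m => .natrec (EPTm.transl u) (EPTm.transl v) m
  | .const r => .const r

/-- The proof term `r u₁ … uₙ` of a Post rule in HA + EM₁. -/
def epostTerm (r : ℕ) (us : List EPTm) : EPTm :=
  if us.isEmpty then .tt else us.foldl EPTm.app (.const r)

/-- The natural deduction system HA + EM₁. -/
inductive EDeriv : Ctx → EPTm → Formula → Prop
  | var {Γ : Ctx} {x : ℕ} {A : Formula} :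
      CtxEntry.pvar x A ∈ Γ → EDeriv Γ (.var x) A
  | hypAx {Γ : Ctx} {a : ℕ} {P : PredSym} {args : List Trm} {α : ℕ} :
      CtxEntry.hvar a (.all α (.atom P args)) ∈ Γ →
      EDeriv Γ (.hyp a P args α) (.all α (.atom P args))
  | witAx {Γ : Ctx} {a : ℕ} {P : PredSym} {args : List Trm} {α : ℕ} :
      CtxEntry.hvar a (.ex α (.atom P.not args)) ∈ Γ →
      EDeriv Γ (.wit a P args α) (.ex α (.atom P.not args))
  | andI {Γ u t A B} : EDeriv Γ u A → EDeriv Γ t B → EDeriv Γ (.pair u t) (.and A B)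
  | andE₀ {Γ u A B} : EDeriv Γ u (.and A B) → EDeriv Γ (.proj false u) A
  | andE₁ {Γ u A B} : EDeriv Γ u (.and A B) → EDeriv Γ (.proj true u) B
  | impE {Γ t u A B} : EDeriv Γ t (.imp A B) → EDeriv Γ u A → EDeriv Γ (.app t u) B
  | impI {Γ x u A B} : EDeriv (CtxEntry.pvar x A :: Γ) u B → EDeriv Γ (.lam x u) (.imp A B)
  | orI₀ {Γ u A B} : EDeriv Γ u A → EDeriv Γ (.inj false u) (.or A B)
  | orI₁ {Γ u A B} : EDeriv Γ u B → EDeriv Γ (.inj true u) (.or A B)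
  | orE {Γ u x y w₁ w₂ A B C} :
      EDeriv Γ u (.or A B) → EDeriv (CtxEntry.pvar x A :: Γ) w₁ C →
      EDeriv (CtxEntry.pvar y B :: Γ) w₂ C → EDeriv Γ (.case u x w₁ y w₂) C
  | allE {Γ u α A} (m : Trm) : EDeriv Γ u (.all α A) → EDeriv Γ (.tapp u m) (A.subst α m)
  | allI {Γ u α A} :
      EDeriv Γ u A → (∀ e ∈ Γ, α ∉ CtxEntry.fv e) → EDeriv Γ (.tlam α u) (.all α A)
  | exI {Γ u α A} (m : Trm) : EDeriv Γ u (A.subst α m) → EDeriv Γ (.exIntro m u) (.ex α A)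
  | exE {Γ u t α x A C} :
      EDeriv Γ u (.ex α A) → EDeriv (CtxEntry.pvar x A :: Γ) t C →
      α ∉ Formula.fv C → (∀ e ∈ Γ, α ∉ CtxEntry.fv e) →
      EDeriv Γ (.exElim u α x t) C
  | ind {Γ u v α A} (m : Trm) :
      EDeriv Γ u (A.subst α .zero) →
      EDeriv Γ v (.all α (.imp A (A.subst α (.succ (.var α))))) →
      EDeriv Γ (.natrec u v m) (A.subst α m)
  | post {Γ : Ctx} (r : ℕ) (Ps : List (PredSym × List Trm)) (P : PredSym)
      (args : List Trm) (us : List EPTm) :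
      (hlen : us.length = Ps.length) →
      (∀ (i : ℕ) (h₁ : i < us.length) (h₂ : i < Ps.length),
        EDeriv Γ (us.get ⟨i, h₁⟩) (.atom (Ps.get ⟨i, h₂⟩).1 (Ps.get ⟨i, h₂⟩).2)) →
      (∀ ρ : ℕ → ℕ, (∀ pa ∈ Ps, pa.1.interp (pa.2.map (Trm.eval ρ)) = true) →
        P.interp (args.map (Trm.eval ρ)) = true) →
      EDeriv Γ (epostTerm r us) (.atom P args)
  | em₁ {Γ w₁ w₂ C} {a : ℕ} {P : PredSym} {args : List Trm} {α : ℕ} :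
      EDeriv (CtxEntry.hvar a (.all α (.atom P args)) :: Γ) w₁ C →
      EDeriv (CtxEntry.hvar a (.ex α (.atom P.not args)) :: Γ) w₂ C →
      EDeriv Γ (.em a w₁ w₂) C

/-! The translation forgets the hypothesis labels `a`, so every rule of HA + EM₁ except the
two EM₁ decisions is literally the translation of the corresponding ≻-rule (the translation
commutes with both substitutions). The decisions are where the non-determinism of NEM
enters: `E_a(u,v) ↦ u` becomes `E(u,v) ≻ u`, and `E_a(u,v) ↦ v[a:=n]` becomes `E(u,v) ≻ v`
followed by one step `WIT ≻ (n,True)` for each witness replaced in `v`, whatever the side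
conditions of the EM₁ rules are. -/

open Relation

namespace EPTm

theorem transl_psubst (x : ℕ) (s t : EPTm) :
    (psubst x s t).transl = PTm.psubst x s.transl t.transl := by
  induction t <;> simp_all [psubst, transl, PTm.psubst, apply_ite transl]

theorem transl_tsubst (α : ℕ) (m : Trm) (t : EPTm) :
    (t.tsubst α m).transl = PTm.tsubst α m t.transl := by
  induction t <;> simp_all [tsubst, transl, PTm.tsubst, apply_ite transl]

end EPTm

namespace NSteps

theorem app {t t' u u' : PTm} (h₁ : NSteps t t') (h₂ : NSteps u u') :
    NSteps (.app t u) (.app t' u') :=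
  (ReflTransGen.lift (PTm.app · u) (fun _ _ => .congAppL u) _ _ h₁).trans
    (ReflTransGen.lift (PTm.app t' ·) (fun _ _ => .congAppR t') _ _ h₂)

theorem tapp {t t' : PTm} (m : Trm) (h : NSteps t t') : NSteps (.tapp t m) (.tapp t' m) :=
  ReflTransGen.lift (PTm.tapp · m) (fun _ _ => .congTapp m) _ _ h

theorem lam (x : ℕ) {u u' : PTm} (h : NSteps u u') : NSteps (.lam x u) (.lam x u') :=
  ReflTransGen.lift (PTm.lam x) (fun _ _ => .congLam x) _ _ h

theorem tlam (α : ℕ) {u u' : PTm} (h : NSteps u u') : NSteps (.tlam α u) (.tlam α u') :=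
  ReflTransGen.lift (PTm.tlam α) (fun _ _ => .congTlam α) _ _ h

theorem pair {t t' u u' : PTm} (h₁ : NSteps t t') (h₂ : NSteps u u') :
    NSteps (.pair t u) (.pair t' u') :=
  (ReflTransGen.lift (PTm.pair · u) (fun _ _ => .congPairL u) _ _ h₁).trans
    (ReflTransGen.lift (PTm.pair t' ·) (fun _ _ => .congPairR t') _ _ h₂)

theorem proj (i : Bool) {u u' : PTm} (h : NSteps u u') : NSteps (.proj i u) (.proj i u') :=
  ReflTransGen.lift (PTm.proj i) (fun _ _ => .congProj i) _ _ h

theorem inj (i : Bool) {u u' : PTm} (h : NSteps u u') : NSteps (.inj i u) (.inj i u') :=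
  ReflTransGen.lift (PTm.inj i) (fun _ _ => .congInj i) _ _ h

theorem case {t t' u u' v v' : PTm} (x y : ℕ) (h₁ : NSteps t t') (h₂ : NSteps u u')
    (h₃ : NSteps v v') : NSteps (.case t x u y v) (.case t' x u' y v') :=
  ((ReflTransGen.lift (PTm.case · x u y v) (fun _ _ => .congCaseT x u y v) _ _ h₁).trans
    (ReflTransGen.lift (PTm.case t' x · y v) (fun _ _ => .congCaseL t' x y v) _ _ h₂)).trans
    (ReflTransGen.lift (PTm.case t' x u' y ·) (fun _ _ => .congCaseR t' x u' y) _ _ h₃)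

theorem exIntro (m : Trm) {t t' : PTm} (h : NSteps t t') :
    NSteps (.exIntro m t) (.exIntro m t') :=
  ReflTransGen.lift (PTm.exIntro m) (fun _ _ => .congExIntro m) _ _ h

theorem exElim {t t' u u' : PTm} (α x : ℕ) (h₁ : NSteps t t') (h₂ : NSteps u u') :
    NSteps (.exElim t α x u) (.exElim t' α x u') :=
  (ReflTransGen.lift (PTm.exElim · α x u) (fun _ _ => .congExElimT α x u) _ _ h₁).trans
    (ReflTransGen.lift (PTm.exElim t' α x ·) (fun _ _ => .congExElimU t' α x) _ _ h₂)

theorem em {u u' v v' : PTm} (h₁ : NSteps u u') (h₂ : NSteps v v') :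
    NSteps (.em u v) (.em u' v') :=
  (ReflTransGen.lift (PTm.em · v) (fun _ _ => .congEmL v) _ _ h₁).trans
    (ReflTransGen.lift (PTm.em u' ·) (fun _ _ => .congEmR u') _ _ h₂)

theorem natrec {u u' v v' : PTm} (m : Trm) (h₁ : NSteps u u') (h₂ : NSteps v v') :
    NSteps (.natrec u v m) (.natrec u' v' m) :=
  (ReflTransGen.lift (PTm.natrec · v m) (fun _ _ => .congRecU v m) _ _ h₁).trans
    (ReflTransGen.lift (PTm.natrec u' · m) (fun _ _ => .congRecV u' m) _ _ h₂)

end NSteps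

theorem EPTm.nsteps_transl_witElim (a n : ℕ) (t : EPTm) :
    NSteps t.transl (t.witElim a n).transl := by
  induction t with
  | var | hyp | tt | const => exact .refl
  | app _ _ iht ihu => exact NSteps.app iht ihu
  | tapp _ m ih => exact NSteps.tapp m ih
  | lam y _ ih => exact NSteps.lam y ih
  | tlam β _ ih => exact NSteps.tlam β ih
  | pair _ _ iht ihu => exact NSteps.pair iht ihu
  | proj i _ ih => exact NSteps.proj i ih
  | inj i _ ih => exact NSteps.inj i ih
  | case _ y _ z _ iht ihu ihv => exact NSteps.case y z iht ihu ihv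
  | exIntro m _ ih => exact NSteps.exIntro m ih
  | exElim _ β y _ iht ihu => exact NSteps.exElim β y iht ihu
  | em _ _ _ ihu ihv =>
      simp only [witElim]
      split
      · exact .refl
      · exact NSteps.em ihu ihv
  | wit _ P args β =>
      simp only [witElim]
      split
      · exact .single (.witIntro P args β n)
      · exact .refl
  | natrec _ _ m ihu ihv => exact NSteps.natrec m ihu ihv

open EPTm in
/-- Preservation of the reduction relation ↦ by ≻:
    each ↦-step is simulated by at least one ≻-step on the translations. -/
theorem preservation_of_reduction (v w : EPTm) (h : EStep v w) :
    Relation.TransGen NStep (EPTm.transl v) (EPTm.transl w) := by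
  induction h with
  | beta => rw [transl_psubst]; exact .single (.beta _ _ _)
  | tbeta => rw [transl_tsubst]; exact .single (.tbeta _ _ _)
  | projPair i => cases i <;> exact .single (.projPair _ _ _)
  | caseInj₀ => rw [transl_psubst]; exact .single (.caseInj₀ _ _ _ _ _)
  | caseInj₁ => rw [transl_psubst]; exact .single (.caseInj₁ _ _ _ _ _)
  | exIE => rw [transl_psubst, transl_tsubst]; exact .single (.exIE _ _ _ _ _)
  | recZero => exact .single (.recZero _ _)
  | recSucc => exact .single (.recSucc _ _ _)
  | permApp => exact .single (.permApp _ _ _)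
  | permTapp => exact .single (.permTapp _ _ _)
  | permProj => exact .single (.permProj _ _ _)
  | permCase => exact .single (.permCase _ _ _ _ _ _)
  | permExElim => exact .single (.permExElim _ _ _ _ _)
  | hypTrue _ _ _ _ _ hP => exact .single (.hypTrue _ _ _ _ hP)
  | emSimp => exact .single (.emL _ _)
  | emRaise a _ v _ _ _ n => exact .head' (.emR _ _) (nsteps_transl_witElim a n v)
  | congAppL _ _ ih => exact TransGen.lift (PTm.app · _) (fun _ _ => .congAppL _) _ _ ih
  | congAppR _ _ ih => exact TransGen.lift (PTm.app _ ·) (fun _ _ => .congAppR _) _ _ ih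
  | congTapp m _ ih => exact TransGen.lift (PTm.tapp · m) (fun _ _ => .congTapp m) _ _ ih
  | congLam x _ ih => exact TransGen.lift (PTm.lam x) (fun _ _ => .congLam x) _ _ ih
  | congTlam α _ ih => exact TransGen.lift (PTm.tlam α) (fun _ _ => .congTlam α) _ _ ih
  | congPairL _ _ ih => exact TransGen.lift (PTm.pair · _) (fun _ _ => .congPairL _) _ _ ih
  | congPairR _ _ ih => exact TransGen.lift (PTm.pair _ ·) (fun _ _ => .congPairR _) _ _ ih
  | congProj i _ ih => exact TransGen.lift (PTm.proj i) (fun _ _ => .congProj i) _ _ ih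
  | congInj i _ ih => exact TransGen.lift (PTm.inj i) (fun _ _ => .congInj i) _ _ ih
  | congCaseT x _ y _ _ ih =>
      exact TransGen.lift (PTm.case · x _ y _) (fun _ _ => .congCaseT _ _ _ _) _ _ ih
  | congCaseL _ x y _ _ ih =>
      exact TransGen.lift (PTm.case _ x · y _) (fun _ _ => .congCaseL _ _ _ _) _ _ ih
  | congCaseR _ x _ y _ ih =>
      exact TransGen.lift (PTm.case _ x _ y ·) (fun _ _ => .congCaseR _ _ _ _) _ _ ih
  | congExIntro m _ ih => exact TransGen.lift (PTm.exIntro m) (fun _ _ => .congExIntro m) _ _ ih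
  | congExElimT α x _ _ ih =>
      exact TransGen.lift (PTm.exElim · α x _) (fun _ _ => .congExElimT _ _ _) _ _ ih
  | congExElimU _ α x _ ih =>
      exact TransGen.lift (PTm.exElim _ α x ·) (fun _ _ => .congExElimU _ _ _) _ _ ih
  | congEmL _ _ _ ih => exact TransGen.lift (PTm.em · _) (fun _ _ => .congEmL _) _ _ ih
  | congEmR _ _ _ ih => exact TransGen.lift (PTm.em _ ·) (fun _ _ => .congEmR _) _ _ ih
  | congRecU _ m _ ih => exact TransGen.lift (PTm.natrec · _ m) (fun _ _ => .congRecU _ m) _ _ ih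
  | congRecV _ m _ ih => exact TransGen.lift (PTm.natrec _ · m) (fun _ _ => .congRecV _ m) _ _ ih
end

section
/- Every proof term t of HA+NEM satisfies property CR3: if t is neutral and for every t' such that t ≻ t' in one step, t' is reducible of type A, then t is reducible of type A. -/
/-! ### Auxiliary lemmas for CR3 -/

lemma Formula.size_pos (A : Formula) : 0 < A.size := by
  cases A <;> simp [Formula.size]

lemma nsn_of_map {f : PTm → PTm} (hf : ∀ {a b : PTm}, NStep a b → NStep (f a) (f b))
    {t : PTm} (h : NSN (f t)) : NSN t :=
  Subrelation.accessible (fun h' => hf h') (InvImage.accessible f h)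

lemma reducible_imp (A B : Formula) (t : PTm) :
    Reducible (.imp A B) t ↔ ∀ u, Reducible A u → Reducible B (.app t u) := by
  rw [Reducible]

lemma reducible_and (A B : Formula) (t : PTm) :
    Reducible (.and A B) t ↔
      Reducible A (.proj false t) ∧ Reducible B (.proj true t) := by
  rw [Reducible]

lemma reducible_or (A B : Formula) (t : PTm) :
    Reducible (.or A B) t ↔ NSN t ∧ (∀ u, NSteps t (.inj false u) → Reducible A u)
      ∧ (∀ u, NSteps t (.inj true u) → Reducible B u) := by
  rw [Reducible]

lemma reducible_all (α : ℕ) (A : Formula) (t : PTm) :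
    Reducible (.all α A) t ↔ ∀ n : Trm, Reducible (A.subst α n) (.tapp t n) := by
  rw [Reducible]

lemma reducible_ex (α : ℕ) (A : Formula) (t : PTm) :
    Reducible (.ex α A) t ↔ NSN t ∧
      ∀ (n : Trm) (u : PTm), NSteps t (.exIntro n u) → Reducible (A.subst α n) u := by
  rw [Reducible]

lemma reducible_atom (P : PredSym) (args : List Trm) (t : PTm) :
    Reducible (.atom P args) t ↔ NSN t := by
  rw [Reducible]

theorem CRmain : ∀ (k : ℕ) (A : Formula), A.size ≤ k →
    (∀ t, Reducible A t → NSN t) ∧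
    (∀ t t', Reducible A t → NStep t t' → Reducible A t') ∧
    (∀ t, Neutral t → (∀ t', NStep t t' → Reducible A t') → Reducible A t) := by
  intro k
  induction k with
  | zero =>
    intro A hA
    exact absurd (lt_of_lt_of_le A.size_pos hA) (lt_irrefl 0)
  | succ k ih =>
    intro A hA
    cases A with
    | atom P args =>
      refine ⟨fun t h => (reducible_atom P args t).mp h, ?_, ?_⟩
      · intro t t' h hs
        rw [reducible_atom] at *
        exact Acc.inv h hs
      · intro t _ h
        rw [reducible_atom]
        exact Acc.intro t fun t' hs => (reducible_atom P args t').mp (h t' hs)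
    | and A B =>
      simp only [Formula.size] at hA
      obtain ⟨cr1A, cr2A, cr3A⟩ := ih A (by omega)
      obtain ⟨cr1B, cr2B, cr3B⟩ := ih B (by omega)
      refine ⟨?_, ?_, ?_⟩
      · intro t h
        rw [reducible_and] at h
        exact nsn_of_map (f := fun t => .proj false t) (fun hs => .congProj false hs)
          (cr1A _ h.1)
      · intro t t' h hs
        rw [reducible_and] at *
        exact ⟨cr2A _ _ h.1 (.congProj false hs), cr2B _ _ h.2 (.congProj true hs)⟩
      · intro t hne h
        rw [reducible_and]
        constructor
        · refine cr3A _ (by simp [Neutral]) fun s hs => ?_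
          cases hs with
          | projPair i u₀ u₁ => simp [Neutral] at hne
          | permProj i u v => simp [Neutral] at hne
          | congProj i hstep => exact ((reducible_and A B _).mp (h _ hstep)).1
        · refine cr3B _ (by simp [Neutral]) fun s hs => ?_
          cases hs with
          | projPair i u₀ u₁ => simp [Neutral] at hne
          | permProj i u v => simp [Neutral] at hne
          | congProj i hstep => exact ((reducible_and A B _).mp (h _ hstep)).2
    | imp A B =>
      simp only [Formula.size] at hA
      obtain ⟨cr1A, cr2A, cr3A⟩ := ih A (by omega)
      obtain ⟨cr1B, cr2B, cr3B⟩ := ih B (by omega)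
      refine ⟨?_, ?_, ?_⟩
      · intro t h
        rw [reducible_imp] at h
        have hvar : Reducible A (.var 0) := by
          refine cr3A _ (by simp [Neutral]) fun t' hs => ?_
          cases hs
        exact nsn_of_map (f := fun t => .app t (.var 0)) (fun hs => .congAppL _ hs)
          (cr1B _ (h _ hvar))
      · intro t t' h hs
        rw [reducible_imp] at *
        intro u hu
        exact cr2B _ _ (h u hu) (.congAppL u hs)
      · intro t hne h
        rw [reducible_imp]
        intro u hu
        have hacc : NSN u := cr1A u hu
        induction hacc with
        | intro u _ ihu =>
          refine cr3B _ (by simp [Neutral]) fun s hs => ?_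
          cases hs with
          | beta x v w => simp [Neutral] at hne
          | permApp v w z => simp [Neutral] at hne
          | congAppL _ hstep =>
            exact (reducible_imp A B _).mp (h _ hstep) u hu
          | congAppR _ hstep =>
            exact ihu _ hstep (cr2A _ _ hu hstep)
    | or A B =>
      simp only [Formula.size] at hA
      obtain ⟨cr1A, cr2A, cr3A⟩ := ih A (by omega)
      obtain ⟨cr1B, cr2B, cr3B⟩ := ih B (by omega)
      refine ⟨?_, ?_, ?_⟩
      · intro t h
        exact ((reducible_or A B t).mp h).1
      · intro t t' h hs
        rw [reducible_or] at *
        exact ⟨Acc.inv h.1 hs,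
          fun u hsteps => h.2.1 u (Relation.ReflTransGen.head hs hsteps),
          fun u hsteps => h.2.2 u (Relation.ReflTransGen.head hs hsteps)⟩
      · intro t hne h
        rw [reducible_or]
        refine ⟨Acc.intro t fun t' hs => ((reducible_or A B t').mp (h t' hs)).1, ?_, ?_⟩
        · intro u hsteps
          rcases Relation.ReflTransGen.cases_head hsteps with heq | ⟨c, hc, hcs⟩
          · rw [heq] at hne; simp [Neutral] at hne
          · exact ((reducible_or A B c).mp (h c hc)).2.1 u hcs
        · intro u hsteps
          rcases Relation.ReflTransGen.cases_head hsteps with heq | ⟨c, hc, hcs⟩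
          · rw [heq] at hne; simp [Neutral] at hne
          · exact ((reducible_or A B c).mp (h c hc)).2.2 u hcs
    | all α A =>
      simp only [Formula.size] at hA
      have ihn : ∀ n : Trm, _ := fun n : Trm => ih (A.subst α n)
        (by rw [Formula.size_subst]; omega)
      refine ⟨?_, ?_, ?_⟩
      · intro t h
        rw [reducible_all] at h
        exact nsn_of_map (f := fun t => .tapp t .zero) (fun hs => .congTapp _ hs)
          ((ihn .zero).1 _ (h .zero))
      · intro t t' h hs
        rw [reducible_all] at *
        intro n
        exact (ihn n).2.1 _ _ (h n) (.congTapp n hs)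
      · intro t hne h
        rw [reducible_all]
        intro n
        refine (ihn n).2.2 _ (by simp [Neutral]) fun s hs => ?_
        cases hs with
        | tbeta β u m => simp [Neutral] at hne
        | permTapp u v m => simp [Neutral] at hne
        | hypTrue P args β m hm => simp [Neutral] at hne
        | congTapp _ hstep =>
          exact (reducible_all α A _).mp (h _ hstep) n
    | ex α A =>
      simp only [Formula.size] at hA
      have ihn : ∀ n : Trm, _ := fun n : Trm => ih (A.subst α n)
        (by rw [Formula.size_subst]; omega)
      refine ⟨?_, ?_, ?_⟩
      · intro t h
        exact ((reducible_ex α A t).mp h).1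
      · intro t t' h hs
        rw [reducible_ex] at *
        exact ⟨Acc.inv h.1 hs,
          fun n u hsteps => h.2 n u (Relation.ReflTransGen.head hs hsteps)⟩
      · intro t hne h
        rw [reducible_ex]
        refine ⟨Acc.intro t fun t' hs => ((reducible_ex α A t').mp (h t' hs)).1, ?_⟩
        intro n u hsteps
        rcases Relation.ReflTransGen.cases_head hsteps with heq | ⟨c, hc, hcs⟩
        · rw [heq] at hne; simp [Neutral] at hne
        · exact ((reducible_ex α A c).mp (h c hc)).2 n u hcs

/-- CR3: a neutral term all of whose one-step reducts are
    reducible of type A is itself reducible of type A. -/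
theorem CR3 (A : Formula) (t : PTm) (hne : Neutral t)
    (h : ∀ t', NStep t t' → Reducible A t') : Reducible A t :=
  (CRmain A.size A le_rfl).2.2 t hne h
end

section
/- Every proof term of HA+NEM satisfies property CR4: the term E(u,v) is reducible of type A if and only if u is reducible of type A and v is reducible of type A. -/
/-! A candidate is a set of terms satisfying CR1 (strong normalization), CR2 (closure under `≻`)
and CR3 strengthened to cover `E(u,v)` besides neutral terms: a term whose reducts all lie in the
set lies in it. For an elimination `e` (projection, application, instantiation) the term
`e E(u,v)` is neutral, and its only reduct not coming from a reduct of `E(u,v)` is `E(e u, e v)`,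
of smaller type; hence candidates are closed under the connectives and every `Reducible A` is one.
In a candidate, `E(u,v)` lies in the set as soon as `u` and `v` do, by induction on their strong
normalization. -/

theorem NSN.of_map {f : PTm → PTm} (hf : ∀ {a b}, NStep a b → NStep (f a) (f b)) {t : PTm}
    (ht : NSN (f t)) : NSN t := by
  generalize hs : f t = s at ht
  induction ht generalizing t with
  | intro s _ ih => exact ⟨_, fun t' ht' => ih _ (hs ▸ hf ht') rfl⟩

def NeutralOrEm (t : PTm) : Prop := Neutral t ∨ ∃ u v, t = .em u v

structure IsCandidate (R : PTm → Prop) : Prop where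
  nsn : ∀ {t}, R t → NSN t
  step : ∀ {t t'}, R t → NStep t t' → R t'
  of_forall_step : ∀ {t}, NeutralOrEm t → (∀ t', NStep t t' → R t') → R t

namespace IsCandidate

variable {R : PTm → Prop}

theorem em_mem (hR : IsCandidate R) {u v : PTm} (hu : R u) (hv : R v) : R (.em u v) := by
  induction hR.nsn hu generalizing v with
  | intro u _ ihu =>
    induction hR.nsn hv with
    | intro v _ ihv =>
      refine hR.of_forall_step (Or.inr ⟨u, v, rfl⟩) fun t' ht' => ?_
      cases ht' with
      | emL => exact hu
      | emR => exact hv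
      | congEmL _ h => exact ihu _ h (hR.step hu h) hv
      | congEmR _ h => exact ihv _ h (hR.step hv h)

theorem proj_mem (hR : IsCandidate R) (i : Bool) {s : PTm} (hs : NeutralOrEm s)
    (h : ∀ s', NStep s s' → R (.proj i s')) : R (.proj i s) := by
  refine hR.of_forall_step (Or.inl trivial) fun t' ht' => ?_
  cases ht' with
  | projPair => simp [NeutralOrEm, Neutral] at hs
  | permProj _ u v => exact hR.em_mem (h u (.emL u v)) (h v (.emR u v))
  | congProj _ h' => exact h _ h'

theorem tapp_mem (hR : IsCandidate R) (m : Trm) {s : PTm} (hs : NeutralOrEm s)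
    (h : ∀ s', NStep s s' → R (.tapp s' m)) : R (.tapp s m) := by
  refine hR.of_forall_step (Or.inl trivial) fun t' ht' => ?_
  cases ht' with
  | tbeta => simp [NeutralOrEm, Neutral] at hs
  | hypTrue => simp [NeutralOrEm, Neutral] at hs
  | permTapp u v => exact hR.em_mem (h u (.emL u v)) (h v (.emR u v))
  | congTapp _ h' => exact h _ h'

theorem app_mem {R' : PTm → Prop} (hR' : IsCandidate R') (hR : IsCandidate R) {s w : PTm}
    (hs : NeutralOrEm s) (h : ∀ s', NStep s s' → ∀ w, R' w → R (.app s' w)) (hw : R' w) :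
    R (.app s w) := by
  induction hR'.nsn hw with
  | intro w _ ihw =>
    refine hR.of_forall_step (Or.inl trivial) fun t' ht' => ?_
    cases ht' with
    | beta => simp [NeutralOrEm, Neutral] at hs
    | permApp u v => exact hR.em_mem (h u (.emL u v) w hw) (h v (.emR u v) w hw)
    | congAppL _ h' => exact h _ h' w hw
    | congAppR _ h' => exact ihw _ h' (hR'.step hw h')

end IsCandidate

theorem isCandidate_nsn : IsCandidate NSN where
  nsn h := h
  step h ht := h.inv ht
  of_forall_step _ h := ⟨_, h⟩

theorem isCandidate_nsn_and_forall_steps (Q : PTm → Prop) (hQ : ∀ {t}, NeutralOrEm t → Q t) :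
    IsCandidate fun t => NSN t ∧ ∀ w, NSteps t w → Q w where
  nsn h := h.1
  step h ht := ⟨h.1.inv ht, fun w hw => h.2 w (.head ht hw)⟩
  of_forall_step {t} ht h := by
    refine ⟨⟨t, fun t' ht' => (h t' ht').1⟩, fun w hw => ?_⟩
    rcases Relation.ReflTransGen.cases_head hw with rfl | ⟨t', ht', hw'⟩
    exacts [hQ ht, (h t' ht').2 w hw']

theorem IsCandidate.and {RA RB : PTm → Prop} (hA : IsCandidate RA) (hB : IsCandidate RB) :
    IsCandidate fun t => RA (.proj false t) ∧ RB (.proj true t) where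
  nsn h := NSN.of_map (.congProj false) (hA.nsn h.1)
  step h ht := ⟨hA.step h.1 (.congProj _ ht), hB.step h.2 (.congProj _ ht)⟩
  of_forall_step ht h :=
    ⟨hA.proj_mem false ht fun s' hs' => (h s' hs').1, hB.proj_mem true ht fun s' hs' => (h s' hs').2⟩

theorem IsCandidate.imp {RA RB : PTm → Prop} (hA : IsCandidate RA) (hB : IsCandidate RB) :
    IsCandidate fun t => ∀ u, RA u → RB (.app t u) where
  nsn h :=
    NSN.of_map (.congAppL (.var 0)) (hB.nsn (h _ (hA.of_forall_step (Or.inl trivial) nofun)))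
  step h ht u hu := hB.step (h u hu) (.congAppL _ ht)
  of_forall_step ht h _ hu := hA.app_mem hB ht h hu

theorem IsCandidate.all {R : Trm → PTm → Prop} (hR : ∀ m, IsCandidate (R m)) :
    IsCandidate fun t => ∀ m, R m (.tapp t m) where
  nsn h := NSN.of_map (.congTapp .zero) ((hR .zero).nsn (h .zero))
  step h ht m := (hR m).step (h m) (.congTapp _ ht)
  of_forall_step ht h m := (hR m).tapp_mem m ht fun s' hs' => h s' hs' m

theorem isCandidate_or (RA RB : PTm → Prop) :
    IsCandidate fun t => NSN t ∧ (∀ u, NSteps t (.inj false u) → RA u)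
      ∧ (∀ u, NSteps t (.inj true u) → RB u) := by
  convert isCandidate_nsn_and_forall_steps
    (fun w => (∀ u, w = .inj false u → RA u) ∧ (∀ u, w = .inj true u → RB u)) ?_ using 3
  · exact ⟨fun h w hw => ⟨fun u hu => h.1 u (hu ▸ hw), fun u hu => h.2 u (hu ▸ hw)⟩,
      fun h => ⟨fun u hu => (h _ hu).1 u rfl, fun u hu => (h _ hu).2 u rfl⟩⟩
  · rintro t ht
    constructor <;> rintro u rfl <;> simp [NeutralOrEm, Neutral] at ht

theorem isCandidate_ex (R : Trm → PTm → Prop) :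
    IsCandidate fun t => NSN t ∧ ∀ m u, NSteps t (.exIntro m u) → R m u := by
  convert isCandidate_nsn_and_forall_steps (fun w => ∀ m u, w = .exIntro m u → R m u) ?_ using 3
  · exact ⟨fun h w hw m u hu => h m u (hu ▸ hw), fun h m u hu => h _ hu m u rfl⟩
  · rintro t ht m u rfl
    simp [NeutralOrEm, Neutral] at ht

theorem reducible_isCandidate (A : Formula) : IsCandidate (Reducible A) := by
  show IsCandidate fun t => Reducible A t
  match A with
  | .atom _ _ => simpa only [Reducible] using isCandidate_nsn
  | .and A B =>
    simpa only [Reducible] using (reducible_isCandidate A).and (reducible_isCandidate B)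
  | .imp A B =>
    simpa only [Reducible] using (reducible_isCandidate A).imp (reducible_isCandidate B)
  | .all α A =>
    simpa only [Reducible] using IsCandidate.all fun m => reducible_isCandidate (A.subst α m)
  | .or A B => simpa only [Reducible] using isCandidate_or (Reducible A) (Reducible B)
  | .ex α A => simpa only [Reducible] using isCandidate_ex fun m => Reducible (A.subst α m)
termination_by A.size
decreasing_by all_goals simp only [Formula.size, Formula.size_subst]; omega

/-- CR4: E(u,v) is reducible of type A iff u and v are. -/
theorem CR4 (A : Formula) (u v : PTm) :
    Reducible A (.em u v) ↔ Reducible A u ∧ Reducible A v := by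
  have hA := reducible_isCandidate A
  exact ⟨fun h => ⟨hA.step h (.emL u v), hA.step h (.emR u v)⟩, fun h => hA.em_mem h.1 h.2⟩
end
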